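/- arXiv:0710.5113 — 5 statements merged into one kernel-verified Lean document; each statement's English description precedes it below -/
import Mathlib

section
/- Suppose n ≥ 2 and {1,…,n} is the disjoint union of two nonempty subsets S_1 and S_2, and suppose the moments factorize over this splitting, i.e. m(T_1 ∪ T_2) = m(T_1)·m(T_2) for every nonempty T_1 ⊆ S_1 and every nonempty T_2 ⊆ S_2. Then the cumulant of the full set vanishes: c({1,…,n}) = 0. -/
/-!
Fix `x ∈ S₁`. The weight `(k-1)!` of a partition with `k` blocks is the number of orderings of
its blocks that put the block of `x` first, so the cumulant is minus the sum of
`(-1)^k ∏ m(Bᵢ)` over ordered partitions `(B₁, …, B_k)` with `x ∈ B₁`. On these, look at the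
first block not contained in `S₁`: if it meets `S₁`, split it into its parts in `S₁` and in
`S₂`; otherwise it lies in `S₂` and its predecessor lies in `S₁`, and the two are merged. This
is an involution that changes `k` by one and, by factorization, preserves `∏ m(Bᵢ)`, so the
terms cancel in pairs.
-/

/-- The joint cumulant `c(S)` associated to a system of joint moments
`m : Finset (Fin n) → ℂ`:
`c(S) = Σ_{partitions {B₁,…,B_k} of S} (k−1)! (−1)^(k−1) ∏_j m(B_j)`. -/
noncomputable def cumulant {n : ℕ} (m : Finset (Fin n) → ℂ) (S : Finset (Fin n)) : ℂ :=
  ∑ P : Finpartition S,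
    (Nat.factorial (P.parts.card - 1) : ℂ) * (-1) ^ (P.parts.card - 1) *
      ∏ B ∈ P.parts, m B

open Finset
open scoped Nat

variable {α : Type*} [DecidableEq α]

namespace Finset

noncomputable def orderings (s : Finset α) : Finset (List α) := s.toList.permutations.toFinset

theorem mem_orderings {s : Finset α} {l : List α} :
    l ∈ s.orderings ↔ l.Nodup ∧ l.toFinset = s := by
  rw [orderings, List.mem_toFinset, List.mem_permutations]
  refine ⟨fun h => ⟨h.nodup_iff.2 s.nodup_toList, ?_⟩, ?_⟩
  · rw [List.toFinset_eq_of_perm _ _ h, toList_toFinset]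
  · rintro ⟨hl, rfl⟩
    exact (List.toFinset_toList hl).symm

theorem card_orderings (s : Finset α) : #s.orderings = (#s)! := by
  rw [orderings, List.toFinset_card_of_nodup (List.nodup_permutations _ s.nodup_toList),
    List.length_permutations, length_toList]

theorem filter_headI_orderings [Inhabited α] {s : Finset α} {b : α} (hb : b ∈ s) :
    {l ∈ s.orderings | l.headI = b} =
      (s.erase b).orderings.map ⟨List.cons b, List.cons_injective⟩ := by
  ext (_ | ⟨a, l⟩)
  · simp only [mem_filter, mem_orderings, List.nodup_nil, List.toFinset_nil, true_and,
      mem_map, reduceCtorEq, and_false, exists_false, iff_false, not_and]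
    rintro rfl
    simp at hb
  · simp only [mem_filter, mem_orderings, List.nodup_cons, List.toFinset_cons, List.headI_cons,
      mem_map, Function.Embedding.coeFn_mk, List.cons.injEq]
    constructor
    · rintro ⟨⟨⟨ha, hl⟩, rfl⟩, rfl⟩
      exact ⟨l, ⟨hl, (erase_insert (List.mem_toFinset.not.2 ha)).symm⟩, rfl, rfl⟩
    · rintro ⟨l, ⟨hl, hls⟩, rfl, rfl⟩
      have hb' : b ∉ l.toFinset := hls ▸ notMem_erase b s
      exact ⟨⟨⟨List.mem_toFinset.not.1 hb', hl⟩, by rw [hls, insert_erase hb]⟩, rfl⟩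

theorem card_filter_headI_orderings [Inhabited α] {s : Finset α} {b : α} (hb : b ∈ s) :
    #{l ∈ s.orderings | l.headI = b} = (#s - 1)! := by
  rw [filter_headI_orderings hb, card_map, card_orderings, card_erase_of_mem hb]

theorem union_inter_of_subset_of_disjoint {A C S : Finset α} (hA : A ⊆ S)
    (hC : Disjoint C S) : (A ∪ C) ∩ S = A := by
  rw [union_inter_distrib_right, inter_eq_left.2 hA, disjoint_iff_inter_eq_empty.1 hC,
    union_empty]

theorem union_sdiff_of_subset_of_disjoint {A C S : Finset α} (hA : A ⊆ S)
    (hC : Disjoint C S) : (A ∪ C) \ S = C := by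
  rw [union_sdiff_distrib, sdiff_eq_empty_iff_subset.2 hA, sdiff_eq_self_of_disjoint hC,
    empty_union]

end Finset

def IsOrderedPartition (s : Finset α) (l : List (Finset α)) : Prop :=
  (∀ B ∈ l, B.Nonempty) ∧ l.Pairwise Disjoint ∧ l.toFinset.sup id = s

noncomputable def orderedPartitions (s : Finset α) : Finset (List (Finset α)) :=
  univ.biUnion fun P : Finpartition s => P.parts.orderings

theorem mem_orderedPartitions {s : Finset α} {l : List (Finset α)} :
    l ∈ orderedPartitions s ↔ IsOrderedPartition s l := by
  simp only [orderedPartitions, mem_biUnion, mem_univ, true_and, mem_orderings]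
  constructor
  · rintro ⟨P, hl, hP⟩
    refine ⟨fun B hB => P.nonempty_of_mem_parts (hP ▸ List.mem_toFinset.2 hB),
      hl.pairwise_of_set_pairwise ?_, hP ▸ P.sup_parts⟩
    rw [← List.coe_toFinset, hP]
    exact P.disjoint
  · rintro ⟨hne, hpw, hsup⟩
    have hnodup : l.Nodup := hpw.imp_of_mem fun hB _ hBC hEq => by
      subst hEq
      exact (hne _ hB).ne_empty (disjoint_self.1 hBC)
    refine ⟨⟨l.toFinset, ?_, hsup, fun h => (hne ⊥ (List.mem_toFinset.1 h)).ne_empty rfl⟩,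
      hnodup, rfl⟩
    rw [supIndep_iff_pairwiseDisjoint, List.coe_toFinset]
    exact hpw.set_pairwise

def FactorsAcross {M : Type*} [Mul M] (S : Finset α) (m : Finset α → M) : Prop :=
  ∀ B, (B ∩ S).Nonempty → (B \ S).Nonempty → m B = m (B ∩ S) * m (B \ S)

section Reordering

variable {R : Type*} [CommRing R]

theorem Finpartition.sum_orderings_filter_mem_headI (m : Finset α → R) {s : Finset α}
    (P : Finpartition s) {x : α} (hx : x ∈ s) :
    ∑ l ∈ P.parts.orderings with x ∈ l.headI, (-1) ^ l.length * (l.map m).prod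
      = -((#P.parts - 1)! * (-1) ^ (#P.parts - 1) * ∏ B ∈ P.parts, m B) := by
  have hfilter : {l ∈ P.parts.orderings | x ∈ l.headI}
      = {l ∈ P.parts.orderings | l.headI = P.part x} := by
    refine filter_congr fun l hl => ⟨fun h => ?_, fun h => h ▸ P.mem_part hx⟩
    cases l with
    | nil => exact absurd h (notMem_empty x)
    | cons B t =>
      have hB : B ∈ P.parts := (mem_orderings.1 hl).2 ▸ List.mem_toFinset.2 List.mem_cons_self
      exact (P.part_eq_of_mem hB h).symm
  have hterm : ∀ l ∈ P.parts.orderings, (-1) ^ l.length * (l.map m).prod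
      = (-1 : R) ^ #P.parts * ∏ B ∈ P.parts, m B := by
    intro l hl
    obtain ⟨hnodup, hP⟩ := mem_orderings.1 hl
    rw [← hP, List.toFinset_card_of_nodup hnodup, List.prod_toFinset m hnodup]
  rw [sum_congr rfl fun l hl => hterm l (mem_filter.1 hl).1, sum_const, hfilter,
    card_filter_headI_orderings (P.part_mem.2 hx), nsmul_eq_mul]
  obtain ⟨k, hk⟩ : ∃ k, #P.parts = k + 1 :=
    ⟨#P.parts - 1, by have := card_pos.2 ⟨_, P.part_mem.2 hx⟩; omega⟩
  rw [hk, pow_succ, Nat.add_sub_cancel]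
  ring

theorem sum_finpartition_eq_neg_sum_orderedPartitions (m : Finset α → R) {s : Finset α}
    {x : α} (hx : x ∈ s) :
    ∑ P : Finpartition s, (#P.parts - 1)! * (-1) ^ (#P.parts - 1) * ∏ B ∈ P.parts, m B
      = -∑ l ∈ orderedPartitions s with x ∈ l.headI, (-1) ^ l.length * (l.map m).prod := by
  rw [orderedPartitions, filter_biUnion, sum_biUnion, ← sum_neg_distrib]
  · simp_rw [Finpartition.sum_orderings_filter_mem_headI m _ hx, neg_neg]
  · intro P _ Q _ hPQ
    refine disjoint_left.2 fun l hlP hlQ => hPQ (Finpartition.ext ?_)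
    rw [← (mem_orderings.1 (mem_filter.1 hlP).1).2, (mem_orderings.1 (mem_filter.1 hlQ).1).2]

end Reordering

section SplitOrMerge

variable (S : Finset α)

def splitOrMerge : List (Finset α) → List (Finset α)
  | [] => []
  | [B] => if B ⊆ S then [B] else [B ∩ S, B \ S]
  | B :: C :: l =>
    if B ⊆ S then
      if Disjoint C S then (B ∪ C) :: l else B :: splitOrMerge (C :: l)
    else (B ∩ S) :: (B \ S) :: C :: l

inductive SplitStep : List (Finset α) → List (Finset α) → Prop
  | head {B : Finset α} (l : List (Finset α)) :
      (B ∩ S).Nonempty → (B \ S).Nonempty → SplitStep (B :: l) ((B ∩ S) :: (B \ S) :: l)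
  | cons (B : Finset α) {l l' : List (Finset α)} : SplitStep l l' → SplitStep (B :: l) (B :: l')

variable {S}

theorem splitOrMerge_cons_of_not_subset {B : Finset α} (hB : ¬B ⊆ S) (l : List (Finset α)) :
    splitOrMerge S (B :: l) = (B ∩ S) :: (B \ S) :: l := by
  cases l <;> simp [splitOrMerge, hB]

theorem splitOrMerge_cons_cons_of_disjoint {B C : Finset α} (hB : B ⊆ S) (hC : Disjoint C S)
    (l : List (Finset α)) : splitOrMerge S (B :: C :: l) = (B ∪ C) :: l := by
  simp [splitOrMerge, hB, hC]

theorem splitOrMerge_inter_sdiff_cons (B : Finset α) (l : List (Finset α)) :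
    splitOrMerge S ((B ∩ S) :: (B \ S) :: l) = B :: l := by
  rw [splitOrMerge_cons_cons_of_disjoint inter_subset_right disjoint_sdiff_self_left,
    union_comm, sdiff_union_inter]

theorem inter_headI_splitOrMerge (l : List (Finset α)) :
    (splitOrMerge S l).headI ∩ S = l.headI ∩ S := by
  fun_induction splitOrMerge S l <;>
    simp_all [union_inter_of_subset_of_disjoint, inter_eq_left.2]

theorem splitOrMerge_spec {l : List (Finset α)} (hne : ∀ B ∈ l, B.Nonempty)
    (hhead : (l.headI ∩ S).Nonempty) (hex : ∃ B ∈ l, ¬B ⊆ S) :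
    SplitStep S l (splitOrMerge S l) ∨ SplitStep S (splitOrMerge S l) l := by
  fun_induction splitOrMerge S l with
  | case1 => simp at hex
  | case2 B hB => simp_all
  | case3 B hB => exact .inl (.head [] hhead (sdiff_nonempty.2 hB))
  | case4 B C l hB hC =>
    have h := SplitStep.head (S := S) l (B := B ∪ C)
      (by rw [union_inter_of_subset_of_disjoint hB hC]; exact hne B (by simp))
      (by rw [union_sdiff_of_subset_of_disjoint hB hC]; exact hne C (by simp))
    rw [union_inter_of_subset_of_disjoint hB hC, union_sdiff_of_subset_of_disjoint hB hC] at h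
    exact .inr h
  | case5 B C l hB hC ih =>
    have hex' : ∃ D ∈ C :: l, ¬D ⊆ S := by
      obtain ⟨D, hD, hDS⟩ := hex
      exact ⟨D, (List.mem_cons.1 hD).resolve_left (by rintro rfl; exact hDS hB), hDS⟩
    rcases ih (fun D hD => hne D (List.mem_cons_of_mem B hD))
      (not_disjoint_iff_nonempty_inter.1 hC) hex' with h | h
    · exact .inl (.cons B h)
    · exact .inr (.cons B h)
  | case6 B C l hB => exact .inl (.head _ hhead (sdiff_nonempty.2 hB))

theorem splitOrMerge_splitOrMerge {l : List (Finset α)} (hne : ∀ B ∈ l, B.Nonempty)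
    (hhead : (l.headI ∩ S).Nonempty) : splitOrMerge S (splitOrMerge S l) = l := by
  fun_induction splitOrMerge S l with
  | case1 => rfl
  | case2 B hB => simp [splitOrMerge, hB]
  | case3 B hB => exact splitOrMerge_inter_sdiff_cons B []
  | case4 B C l hB hC =>
    have hBC : ¬B ∪ C ⊆ S := fun h =>
      (hne C (by simp)).ne_empty (hC.eq_bot_of_le (subset_union_right.trans h))
    rw [splitOrMerge_cons_of_not_subset hBC, union_inter_of_subset_of_disjoint hB hC,
      union_sdiff_of_subset_of_disjoint hB hC]
  | case5 B C l hB hC ih =>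
    obtain ⟨z, hz⟩ : ((splitOrMerge S (C :: l)).headI ∩ S).Nonempty := by
      rw [inter_headI_splitOrMerge]; exact not_disjoint_iff_nonempty_inter.1 hC
    conv_rhs => rw [← ih (fun D hD => hne D (List.mem_cons_of_mem B hD))
      (not_disjoint_iff_nonempty_inter.1 hC)]
    rcases h : splitOrMerge S (C :: l) with _ | ⟨D, r⟩ <;> rw [h] at hz
    · exact absurd (mem_inter.1 hz).1 (notMem_empty z)
    · have hD : ¬Disjoint D S := not_disjoint_iff.2 ⟨z, (mem_inter.1 hz).1, (mem_inter.1 hz).2⟩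
      simp [splitOrMerge, hB, hD]
  | case6 B C l hB => exact splitOrMerge_inter_sdiff_cons B (C :: l)

namespace SplitStep

variable {l l' : List (Finset α)}

theorem length_eq (h : SplitStep S l l') : l'.length = l.length + 1 := by
  induction h <;> simp_all

theorem ne (h : SplitStep S l l') : l' ≠ l := fun heq => by simpa [heq] using h.length_eq

theorem prod_map_eq {M : Type*} [CommMonoid M] {m : Finset α → M} (hm : FactorsAcross S m)
    (h : SplitStep S l l') : (l'.map m).prod = (l.map m).prod := by
  induction h with
  | head l h₁ h₂ => simp [hm _ h₁ h₂, mul_assoc]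
  | cons B _ ih => simp [ih]

theorem forall_nonempty_iff (h : SplitStep S l l') :
    (∀ B ∈ l', B.Nonempty) ↔ ∀ B ∈ l, B.Nonempty := by
  induction h with
  | head l h₁ h₂ => simp [h₁, h₂, h₁.mono inter_subset_left]
  | cons B _ ih => simp [ih]

theorem sup_toFinset_eq (h : SplitStep S l l') : l'.toFinset.sup id = l.toFinset.sup id := by
  induction h with
  | @head B l _ _ =>
    simp only [List.toFinset_cons, sup_insert, id, sup_eq_union]
    rw [← union_assoc, union_comm (B ∩ S), sdiff_union_inter]
  | cons B _ ih => simp [ih]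

theorem pairwise_disjoint_iff (h : SplitStep S l l') :
    l'.Pairwise Disjoint ↔ l.Pairwise Disjoint := by
  induction h with
  | @head B l _ _ =>
    have hB : ∀ D, Disjoint B D ↔ Disjoint (B ∩ S) D ∧ Disjoint (B \ S) D := fun D => by
      conv_lhs => rw [← sdiff_union_inter B S]
      rw [disjoint_union_left, and_comm]
    simp [List.pairwise_cons, hB, forall_and, (disjoint_sdiff_inter B S).symm, and_assoc]
  | cons B h ih =>
    have hB : ∀ t : List (Finset α), (∀ D ∈ t, Disjoint B D) ↔ Disjoint B (t.toFinset.sup id) := by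
      intro t; rw [Finset.disjoint_sup_right]; simp
    rw [List.pairwise_cons, List.pairwise_cons, hB, hB, h.sup_toFinset_eq, ih]

theorem isOrderedPartition_iff {s : Finset α} (h : SplitStep S l l') :
    IsOrderedPartition s l' ↔ IsOrderedPartition s l := by
  rw [IsOrderedPartition, IsOrderedPartition, h.forall_nonempty_iff, h.pairwise_disjoint_iff,
    h.sup_toFinset_eq]

end SplitStep

end SplitOrMerge

section Cancellation

variable {R : Type*} [CommRing R] {m : Finset α → R} {S s : Finset α} {x y : α}

theorem sum_orderedPartitions_eq_zero (hm : FactorsAcross S m) (hxS : x ∈ S) (hys : y ∈ s)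
    (hyS : y ∉ S) :
    ∑ l ∈ orderedPartitions s with x ∈ l.headI, (-1) ^ l.length * (l.map m).prod = 0 := by
  have hmem : ∀ {l}, l ∈ {l ∈ orderedPartitions s | x ∈ l.headI} ↔
      IsOrderedPartition s l ∧ x ∈ l.headI := by
    intro l; rw [mem_filter, mem_orderedPartitions]
  have hhead : ∀ l : List (Finset α), x ∈ (splitOrMerge S l).headI ↔ x ∈ l.headI := fun l => by
    simpa [hxS] using congrArg (x ∈ ·) (inter_headI_splitOrMerge (S := S) l)
  have hstep : ∀ l ∈ {l ∈ orderedPartitions s | x ∈ l.headI},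
      SplitStep S l (splitOrMerge S l) ∨ SplitStep S (splitOrMerge S l) l := by
    intro l hl
    obtain ⟨⟨hne, -, hsup⟩, hx⟩ := hmem.1 hl
    obtain ⟨B, hB, hyB⟩ : ∃ B ∈ l.toFinset, y ∈ B := by simpa [← hsup] using hys
    exact splitOrMerge_spec hne ⟨x, mem_inter.2 ⟨hx, hxS⟩⟩
      ⟨B, List.mem_toFinset.1 hB, fun h => hyS (h hyB)⟩
  refine sum_involution (fun l _ => splitOrMerge S l) (fun l hl => ?_) (fun l hl _ => ?_)
    (fun l hl => ?_) (fun l hl => ?_)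
  · rcases hstep l hl with h | h <;> rw [h.length_eq, h.prod_map_eq hm, pow_succ] <;> ring
  · rcases hstep l hl with h | h
    exacts [h.ne, h.ne.symm]
  · rw [hmem, hhead]
    rcases hstep l hl with h | h
    · rw [h.isOrderedPartition_iff]; exact hmem.1 hl
    · rw [← h.isOrderedPartition_iff]; exact hmem.1 hl
  · obtain ⟨⟨hne, -⟩, hx⟩ := hmem.1 hl
    exact splitOrMerge_splitOrMerge hne ⟨x, mem_inter.2 ⟨hx, hxS⟩⟩

theorem sum_finpartition_eq_zero_of_factorsAcross (hm : FactorsAcross S m) (hxs : x ∈ s)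
    (hxS : x ∈ S) (hys : y ∈ s) (hyS : y ∉ S) :
    ∑ P : Finpartition s, (#P.parts - 1)! * (-1) ^ (#P.parts - 1) * ∏ B ∈ P.parts, m B = 0 := by
  rw [sum_finpartition_eq_neg_sum_orderedPartitions m hxs,
    sum_orderedPartitions_eq_zero hm hxS hys hyS, neg_zero]

end Cancellation

theorem cumulant_eq_zero_of_factorizing_general {n : ℕ}
    (m : Finset (Fin n) → ℂ) (S₁ S₂ : Finset (Fin n))
    (h₁ : S₁.Nonempty) (h₂ : S₂.Nonempty)
    (hdisj : Disjoint S₁ S₂) (hunion : S₁ ∪ S₂ = Finset.univ)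
    (hfact : ∀ T₁ ⊆ S₁, ∀ T₂ ⊆ S₂, T₁.Nonempty → T₂.Nonempty →
      m (T₁ ∪ T₂) = m T₁ * m T₂) :
    cumulant m Finset.univ = 0 := by
  obtain ⟨x, hx⟩ := h₁
  obtain ⟨y, hy⟩ := h₂
  have hm : FactorsAcross S₁ m := by
    intro B hB₁ hB₂
    have hsub : B \ S₁ ⊆ S₂ := fun a ha =>
      (mem_union.1 (hunion ▸ mem_univ a)).resolve_left (mem_sdiff.1 ha).2
    rw [← hfact _ inter_subset_right _ hsub hB₁ hB₂, union_comm, sdiff_union_inter]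
  exact sum_finpartition_eq_zero_of_factorsAcross hm (mem_univ x) hx (mem_univ y)
    (disjoint_right.1 hdisj hy)

/-- Suppose `n ≥ 2` and `{1,…,n}` is the disjoint union of two nonempty
subsets `S₁` and `S₂`, and suppose the moments factorize over this splitting, i.e.
`m(T₁ ∪ T₂) = m(T₁)·m(T₂)` for every nonempty `T₁ ⊆ S₁` and every nonempty `T₂ ⊆ S₂`.
Then the cumulant of the full set vanishes: `c({1,…,n}) = 0`. -/
theorem cumulant_eq_zero_of_factorizing {n : ℕ} (hn : 2 ≤ n)
    (m : Finset (Fin n) → ℂ) (S₁ S₂ : Finset (Fin n))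
    (h₁ : S₁.Nonempty) (h₂ : S₂.Nonempty)
    (hdisj : Disjoint S₁ S₂) (hunion : S₁ ∪ S₂ = Finset.univ)
    (hfact : ∀ T₁ ⊆ S₁, ∀ T₂ ⊆ S₂, T₁.Nonempty → T₂.Nonempty →
      m (T₁ ∪ T₂) = m T₁ * m T₂) :
    cumulant m Finset.univ = 0 :=
  cumulant_eq_zero_of_factorizing_general m S₁ S₂ h₁ h₂ hdisj hunion hfact
end

section
/- Let H = H_A ⊗ H_B be the tensor product of two finite-dimensional complex inner product spaces, with factorized initial and final states ψ_i = ψ_i^A ⊗ ψ_i^B and ψ_f = ψ_f^A ⊗ ψ_f^B, factorized evolutions U_k = U_k^A ⊗ U_k^B for k = 1,…,n+1, and observables of the form A_k = X_k ⊗ I for k ∈ S_1 and A_k = I ⊗ Y_k for k ∈ S_2, where {1,…,n} is the disjoint union of S_1 and S_2. Assume D := ⟨ψ_f, M(∅) ψ_i⟩ ≠ 0. Then the observables indexed by S_1 and S_2 are weakly independent: w(T_1 ∪ T_2) = w(T_1)·w(T_2) for every T_1 ⊆ S_1 and T_2 ⊆ S_2. -/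
open scoped TensorProduct

/-- The operator `M(S) = U_{n+1} B_n U_n ⋯ B_1 U_1` of a sequential weak measurement,
where `B_k = A_k` if `k ∈ S` and `B_k = 1` otherwise. -/
noncomputable def seqOp {H : Type*} [AddCommGroup H] [Module ℂ H] (n : ℕ)
    (A : Fin n → Module.End ℂ H) (U : Fin (n + 1) → Module.End ℂ H)
    (S : Finset (Fin n)) : Module.End ℂ H :=
  U (Fin.last n) *
    ((List.ofFn fun k : Fin n => (if k ∈ S then A k else 1) * U k.castSucc).reverse).prod

/-- The sesquilinear pairing `v ↦ ⟨ψ_f^A ⊗ ψ_f^B, v⟩` on the tensor product `H_A ⊗ H_B`,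
i.e. the unique linear map sending a pure tensor `a ⊗ b` to `⟨ψ_f^A, a⟩ · ⟨ψ_f^B, b⟩`
(this is the inner product against `ψ_f^A ⊗ ψ_f^B` for the natural inner product on the
tensor product of two inner product spaces). -/
noncomputable def tensorInnerPairing {HA HB : Type*}
    [NormedAddCommGroup HA] [InnerProductSpace ℂ HA]
    [NormedAddCommGroup HB] [InnerProductSpace ℂ HB] (ψfA : HA) (ψfB : HB) :
    HA ⊗[ℂ] HB →ₗ[ℂ] ℂ :=
  TensorProduct.lift <| LinearMap.mk₂ ℂ
    (fun a b => (inner ℂ ψfA a : ℂ) * (inner ℂ ψfB b : ℂ))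
    (fun a a' b => by simp [inner_add_right]; ring)
    (fun c a b => by simp [inner_smul_right]; ring)
    (fun a b b' => by simp [inner_add_right]; ring)
    (fun c a b => by simp [inner_smul_right]; ring)

/-!
With everything factorized, each operator `M(T)` is itself a pure tensor
`M_A(T ∩ S₁) ⊗ M_B(T \ S₁)`, where `M_A`, `M_B` are the sequential operators of the two
subsystems. Hence the numerator of `w(T)` is the product of an `H_A`-amplitude depending only
on `T ∩ S₁` and an `H_B`-amplitude depending only on `T \ S₁`, and for `T₁ ⊆ S₁`, `T₂ ⊆ S₂` the
ratio for `T₁ ∪ T₂` splits into the ratios for `T₁` and for `T₂`.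
-/

open scoped InnerProductSpace

open TensorProduct

section SeqOp

variable {H HA HB : Type*} [AddCommGroup H] [Module ℂ H]
  [AddCommGroup HA] [Module ℂ HA] [AddCommGroup HB] [Module ℂ HB] {n : ℕ}

theorem seqOp_ite_eq_seqOp_inter (X : Fin n → Module.End ℂ H)
    (U : Fin (n + 1) → Module.End ℂ H) (S T : Finset (Fin n)) :
    seqOp n (fun k => if k ∈ S then X k else 1) U T = seqOp n X U (T ∩ S) := by
  simp only [seqOp, Finset.mem_inter, ite_and]

theorem seqOp_ite_eq_seqOp_sdiff (Y : Fin n → Module.End ℂ H)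
    (U : Fin (n + 1) → Module.End ℂ H) (S T : Finset (Fin n)) :
    seqOp n (fun k => if k ∈ S then 1 else Y k) U T = seqOp n Y U (T \ S) := by
  simp only [seqOp, Finset.mem_sdiff, ite_and, ite_not]

noncomputable def tensorMapMonoidHom :
    Module.End ℂ HA × Module.End ℂ HB →* Module.End ℂ (HA ⊗[ℂ] HB) where
  toFun p := map p.1 p.2
  map_one' := TensorProduct.map_one
  map_mul' p q := TensorProduct.map_mul p.1 q.1 p.2 q.2

theorem seqOp_tensor_map (X : Fin n → Module.End ℂ HA) (Y : Fin n → Module.End ℂ HB)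
    (UA : Fin (n + 1) → Module.End ℂ HA) (UB : Fin (n + 1) → Module.End ℂ HB)
    (T : Finset (Fin n)) :
    seqOp n (fun k => map (X k) (Y k)) (fun k => map (UA k) (UB k)) T =
      map (seqOp n X UA T) (seqOp n Y UB T) := by
  set p : Fin n → Module.End ℂ HA × Module.End ℂ HB := fun k =>
    ((if k ∈ T then X k else 1) * UA k.castSucc, (if k ∈ T then Y k else 1) * UB k.castSucc)
  have hfactor : (List.ofFn fun k => (if k ∈ T then map (X k) (Y k) else 1) *
      map (UA k.castSucc) (UB k.castSucc)) = (List.ofFn p).map tensorMapMonoidHom := by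
    rw [List.map_ofFn]
    congr 1
    funext k
    split_ifs with hk <;> simp [p, hk, tensorMapMonoidHom, ← TensorProduct.map_mul]
  have hprod : ((List.ofFn p).reverse.map tensorMapMonoidHom).prod =
      map ((List.ofFn p).reverse.map Prod.fst).prod ((List.ofFn p).reverse.map Prod.snd).prod := by
    rw [← map_list_prod, ← MonoidHom.coe_fst, ← MonoidHom.coe_snd, ← map_list_prod,
      ← map_list_prod]
    rfl
  rw [seqOp, hfactor, ← List.map_reverse, hprod, ← TensorProduct.map_mul, List.map_reverse,
    List.map_reverse, List.map_ofFn, List.map_ofFn]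
  rfl

end SeqOp

theorem tensorInnerPairing_tmul {HA HB : Type*}
    [NormedAddCommGroup HA] [InnerProductSpace ℂ HA]
    [NormedAddCommGroup HB] [InnerProductSpace ℂ HB] (ψfA a : HA) (ψfB b : HB) :
    tensorInnerPairing ψfA ψfB (a ⊗ₜ b) = ⟪ψfA, a⟫_ℂ * ⟪ψfB, b⟫_ℂ :=
  rfl

/-- Both sides vanish when `a * b = 0`, by the convention `x / 0 = 0`. -/
theorem mul_div_mul_eq_mul_div_mul_mul_mul_div_mul {K : Type*} [Field K] (x y a b : K) :
    x * y / (a * b) = x * b / (a * b) * (a * y / (a * b)) := by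
  rcases eq_or_ne (a * b) 0 with h | h
  · simp [h]
  · field_simp

theorem weaklyIndependent_of_tensor_factorized_general
    {HA HB : Type*}
    [NormedAddCommGroup HA] [InnerProductSpace ℂ HA]
    [NormedAddCommGroup HB] [InnerProductSpace ℂ HB]
    {n : ℕ} (ψiA ψfA : HA) (ψiB ψfB : HB)
    (S₁ S₂ : Finset (Fin n)) (hdisj : Disjoint S₁ S₂)
    (X : Fin n → Module.End ℂ HA) (Y : Fin n → Module.End ℂ HB)
    (UA : Fin (n + 1) → Module.End ℂ HA) (UB : Fin (n + 1) → Module.End ℂ HB)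
    (A : Fin n → Module.End ℂ (HA ⊗[ℂ] HB))
    (hA : ∀ k, A k = if k ∈ S₁ then TensorProduct.map (X k) LinearMap.id
      else TensorProduct.map LinearMap.id (Y k))
    (U : Fin (n + 1) → Module.End ℂ (HA ⊗[ℂ] HB))
    (hU : ∀ k, U k = TensorProduct.map (UA k) (UB k))
    (w : Finset (Fin n) → ℂ)
    (hw : ∀ S, w S =
      tensorInnerPairing ψfA ψfB (seqOp n A U S (ψiA ⊗ₜ[ℂ] ψiB)) /
        tensorInnerPairing ψfA ψfB (seqOp n A U ∅ (ψiA ⊗ₜ[ℂ] ψiB))) :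
    ∀ T₁ ⊆ S₁, ∀ T₂ ⊆ S₂, w (T₁ ∪ T₂) = w T₁ * w T₂ := by
  intro T₁ hT₁ T₂ hT₂
  have hA' : A = fun k => map (if k ∈ S₁ then X k else 1) (if k ∈ S₁ then 1 else Y k) := by
    funext k
    rw [hA]
    split_ifs <;> rfl
  have hamplitude : ∀ T, tensorInnerPairing ψfA ψfB (seqOp n A U T (ψiA ⊗ₜ[ℂ] ψiB)) =
      ⟪ψfA, seqOp n X UA (T ∩ S₁) ψiA⟫_ℂ * ⟪ψfB, seqOp n Y UB (T \ S₁) ψiB⟫_ℂ := by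
    intro T
    rw [hA', funext hU, seqOp_tensor_map, map_tmul, tensorInnerPairing_tmul,
      seqOp_ite_eq_seqOp_inter, seqOp_ite_eq_seqOp_sdiff]
  have hT₂S₁ : Disjoint T₂ S₁ := hdisj.symm.mono_left hT₂
  simp only [hw, hamplitude, Finset.union_inter_distrib_right, Finset.union_sdiff_distrib,
    Finset.inter_eq_left.2 hT₁, Finset.sdiff_eq_empty_iff_subset.2 hT₁,
    Finset.disjoint_iff_inter_eq_empty.1 hT₂S₁, hT₂S₁.sdiff_eq_left, Finset.empty_inter,
    Finset.empty_sdiff, Finset.union_empty, Finset.empty_union]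
  exact mul_div_mul_eq_mul_div_mul_mul_mul_div_mul _ _ _ _

/-- On `H = H_A ⊗ H_B`, with factorized initial and final states
`ψ_i = ψ_i^A ⊗ ψ_i^B`, `ψ_f = ψ_f^A ⊗ ψ_f^B`, factorized evolutions `U_k = U_k^A ⊗ U_k^B`,
and observables `A_k = X_k ⊗ I` for `k ∈ S₁` and `A_k = I ⊗ Y_k` for `k ∈ S₂`, where
`{1,…,n} = S₁ ⊔ S₂`, and assuming `D = ⟨ψ_f, M(∅) ψ_i⟩ ≠ 0`, the observables indexed by
`S₁` and `S₂` are weakly independent: `w(T₁ ∪ T₂) = w(T₁)·w(T₂)` for all `T₁ ⊆ S₁`,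
`T₂ ⊆ S₂`. -/
theorem weaklyIndependent_of_tensor_factorized
    {HA HB : Type*}
    [NormedAddCommGroup HA] [InnerProductSpace ℂ HA] [FiniteDimensional ℂ HA]
    [NormedAddCommGroup HB] [InnerProductSpace ℂ HB] [FiniteDimensional ℂ HB]
    {n : ℕ} (ψiA ψfA : HA) (ψiB ψfB : HB)
    (S₁ S₂ : Finset (Fin n)) (hdisj : Disjoint S₁ S₂) (hunion : S₁ ∪ S₂ = Finset.univ)
    (X : Fin n → Module.End ℂ HA) (Y : Fin n → Module.End ℂ HB)
    (UA : Fin (n + 1) → Module.End ℂ HA) (UB : Fin (n + 1) → Module.End ℂ HB)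
    (A : Fin n → Module.End ℂ (HA ⊗[ℂ] HB))
    (hA : ∀ k, A k = if k ∈ S₁ then TensorProduct.map (X k) LinearMap.id
      else TensorProduct.map LinearMap.id (Y k))
    (U : Fin (n + 1) → Module.End ℂ (HA ⊗[ℂ] HB))
    (hU : ∀ k, U k = TensorProduct.map (UA k) (UB k))
    (w : Finset (Fin n) → ℂ)
    (hw : ∀ S, w S =
      tensorInnerPairing ψfA ψfB (seqOp n A U S (ψiA ⊗ₜ[ℂ] ψiB)) /
        tensorInnerPairing ψfA ψfB (seqOp n A U ∅ (ψiA ⊗ₜ[ℂ] ψiB)))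
    (hD : tensorInnerPairing ψfA ψfB (seqOp n A U ∅ (ψiA ⊗ₜ[ℂ] ψiB)) ≠ 0) :
    ∀ T₁ ⊆ S₁, ∀ T₂ ⊆ S₂, w (T₁ ∪ T₂) = w T₁ * w T₂ :=
  weaklyIndependent_of_tensor_factorized_general ψiA ψfA ψiB ψfB S₁ S₂ hdisj X Y UA UB A hA U hU w
    hw
end

section
/- Suppose that for some index j ∈ {1,…,n} the evolution U_j factors through a one-dimensional 'bottleneck': U_j = W ∘ P_b ∘ V, where P_b is the rank-one operator P_b x = ⟨ψ_b, x⟩ ψ_b for some unit vector ψ_b ∈ H and W, V are linear operators on H. Assume D := ⟨ψ_f, M(∅) ψ_i⟩ ≠ 0. Then the measurements before and after the bottleneck are weakly independent: for every T_1 ⊆ {1,…,j−1} and every T_2 ⊆ {j,…,n}, w(T_1 ∪ T_2) = w(T_1)·w(T_2). -/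
/-- The sequential weak value `w(S) = ⟨ψ_f, M(S) ψ_i⟩ / ⟨ψ_f, M(∅) ψ_i⟩`. -/
noncomputable def weakValue {H : Type*} [NormedAddCommGroup H] [InnerProductSpace ℂ H]
    (n : ℕ) (A : Fin n → Module.End ℂ H) (U : Fin (n + 1) → Module.End ℂ H)
    (ψi ψf : H) (S : Finset (Fin n)) : ℂ :=
  (inner ℂ ψf (seqOp n A U S ψi) : ℂ) / (inner ℂ ψf (seqOp n A U ∅ ψi) : ℂ)

/-!
Because the bottleneck has rank one, the amplitude `⟨ψ_f, M(S) ψ_i⟩` factors as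
`β(S) · α(S)` with `β(S) = ⟨ψ_b, V M_<(S) ψ_i⟩` and `α(S) = ⟨ψ_f, M_≥(S) W ψ_b⟩`, where `M_<(S)`
(the evolution before the bottleneck) only sees `S ∩ {k < j}` and `M_≥(S)` (the evolution after
it) only sees `S ∩ {k ≥ j}`. Hence for `T₁` below and `T₂` above `j` the four amplitudes entering
`w(T₁ ∪ T₂)`, `w(T₁)`, `w(T₂)` are `β(T₁)α(T₂)`, `β(T₁)α(∅)`, `β(∅)α(T₂)` and `D = β(∅)α(∅)`.
-/

open List

theorem List.prod_reverse_eq_prod_reverse_drop_mul {M : Type*} [Monoid M] (l : List M) (j : ℕ) :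
    l.reverse.prod = (l.drop j).reverse.prod * (l.take j).reverse.prod := by
  conv_lhs => rw [← l.take_append_drop j]
  rw [reverse_append, prod_append]

theorem List.take_ofFn_congr {α : Type*} {n j : ℕ} {f g : Fin n → α}
    (h : ∀ k : Fin n, (k : ℕ) < j → f k = g k) : (ofFn f).take j = (ofFn g).take j := by
  refine ext_getElem (by simp) fun i hf _ => ?_
  simp only [length_take, length_ofFn, Nat.lt_min] at hf
  simpa using h ⟨i, hf.2⟩ hf.1

theorem List.drop_ofFn_congr {α : Type*} {n j : ℕ} {f g : Fin n → α}
    (h : ∀ k : Fin n, j ≤ (k : ℕ) → f k = g k) : (ofFn f).drop j = (ofFn g).drop j := by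
  refine ext_getElem (by simp) fun i hf _ => ?_
  simp only [length_drop, length_ofFn] at hf
  simpa using h ⟨j + i, by omega⟩ (by simp)

theorem mul_div_mul_eq_div_mul_div {K : Type*} [Field K] (b₁ a₂ b₀ a₀ : K) :
    b₁ * a₂ / (b₀ * a₀) = b₁ * a₀ / (b₀ * a₀) * (b₀ * a₂ / (b₀ * a₀)) := by
  rcases eq_or_ne b₀ 0 with rfl | hb₀
  · simp
  rcases eq_or_ne a₀ 0 with rfl | ha₀
  · simp
  field_simp

section SequentialMeasurement

variable {H : Type*} [AddCommGroup H] [Module ℂ H] {n : ℕ}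
  (A : Fin n → Module.End ℂ H) (U : Fin (n + 1) → Module.End ℂ H)

def seqFactor (S : Finset (Fin n)) (k : Fin n) : Module.End ℂ H :=
  (if k ∈ S then A k else 1) * U k.castSucc

/-- The part `B_{j-1} U_{j-1} ⋯ B_1 U_1` of `M(S)` before the evolution `U_j`. -/
def seqOpBelow (j : Fin n) (S : Finset (Fin n)) : Module.End ℂ H :=
  ((ofFn (seqFactor A U S)).take j).reverse.prod

/-- The part `U_{n+1} B_n ⋯ U_{j+1} B_j` of `M(S)` after the evolution `U_j`. -/
def seqOpAbove (j : Fin n) (S : Finset (Fin n)) : Module.End ℂ H :=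
  U (Fin.last n) * ((ofFn (seqFactor A U S)).drop (j + 1)).reverse.prod *
    (if j ∈ S then A j else 1)

theorem seqOp_eq_seqOpAbove_mul (j : Fin n) (S : Finset (Fin n)) :
    seqOp n A U S = seqOpAbove A U j S * U j.castSucc * seqOpBelow A U j S := by
  have hdrop : (ofFn (seqFactor A U S)).drop j =
      seqFactor A U S j :: (ofFn (seqFactor A U S)).drop (j + 1) := by
    rw [drop_eq_getElem_cons (by simp)]
    simp
  change U _ * (ofFn (seqFactor A U S)).reverse.prod = _
  rw [prod_reverse_eq_prod_reverse_drop_mul _ j, hdrop, reverse_cons,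
    prod_append, prod_singleton, seqFactor, seqOpAbove, seqOpBelow]
  noncomm_ring

variable {A U}

theorem seqOpBelow_congr {j : Fin n} {S S' : Finset (Fin n)}
    (h : ∀ k < j, k ∈ S ↔ k ∈ S') : seqOpBelow A U j S = seqOpBelow A U j S' := by
  rw [seqOpBelow, seqOpBelow, take_ofFn_congr fun k hk => ?_]
  simp [seqFactor, h k hk]

theorem seqOpAbove_congr {j : Fin n} {S S' : Finset (Fin n)}
    (h : ∀ k, j ≤ k → (k ∈ S ↔ k ∈ S')) : seqOpAbove A U j S = seqOpAbove A U j S' := by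
  rw [seqOpAbove, seqOpAbove, drop_ofFn_congr fun k hk => ?_, if_congr (h j le_rfl) rfl rfl]
  simp [seqFactor, h k (Fin.le_def.mpr (by omega))]

end SequentialMeasurement

theorem inner_seqOp_of_bottleneck {H : Type*} [NormedAddCommGroup H] [InnerProductSpace ℂ H]
    {n : ℕ} {ψb : H} {A : Fin n → Module.End ℂ H} {U : Fin (n + 1) → Module.End ℂ H}
    {j : Fin n} {W V : Module.End ℂ H}
    (hbottleneck : ∀ x : H, U j.castSucc x = W ((inner ℂ ψb (V x) : ℂ) • ψb))
    (ψi ψf : H) (S : Finset (Fin n)) :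
    (inner ℂ ψf (seqOp n A U S ψi) : ℂ) =
      inner ℂ ψb (V (seqOpBelow A U j S ψi)) * inner ℂ ψf (seqOpAbove A U j S (W ψb)) := by
  rw [seqOp_eq_seqOpAbove_mul A U j, Module.End.mul_apply, Module.End.mul_apply, hbottleneck,
    map_smul, map_smul, inner_smul_right]

theorem weaklyIndependent_of_bottleneck_general
    {H : Type*} [NormedAddCommGroup H] [InnerProductSpace ℂ H]
    {n : ℕ} (ψi ψf ψb : H)
    (A : Fin n → Module.End ℂ H) (U : Fin (n + 1) → Module.End ℂ H)
    (j : Fin n) (W V : Module.End ℂ H)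
    (hbottleneck : ∀ x : H, U j.castSucc x = W ((inner ℂ ψb (V x) : ℂ) • ψb))
    (T₁ T₂ : Finset (Fin n)) (hT₁ : ∀ k ∈ T₁, k < j) (hT₂ : ∀ k ∈ T₂, j ≤ k) :
    weakValue n A U ψi ψf (T₁ ∪ T₂) =
      weakValue n A U ψi ψf T₁ * weakValue n A U ψi ψf T₂ := by
  have below₁ : ∀ k < j, k ∉ T₂ := fun k hk hk₂ => (hT₂ k hk₂).not_gt hk
  have above₂ : ∀ k, j ≤ k → k ∉ T₁ := fun k hk hk₁ => (hT₁ k hk₁).not_ge hk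
  have hβ₁ : seqOpBelow A U j (T₁ ∪ T₂) = seqOpBelow A U j T₁ :=
    seqOpBelow_congr fun k hk => by simp [below₁ k hk]
  have hβ₂ : seqOpBelow A U j T₂ = seqOpBelow A U j ∅ :=
    seqOpBelow_congr fun k hk => by simp [below₁ k hk]
  have hα₂ : seqOpAbove A U j (T₁ ∪ T₂) = seqOpAbove A U j T₂ :=
    seqOpAbove_congr fun k hk => by simp [above₂ k hk]
  have hα₁ : seqOpAbove A U j T₁ = seqOpAbove A U j ∅ :=
    seqOpAbove_congr fun k hk => by simp [above₂ k hk]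
  simp only [weakValue, inner_seqOp_of_bottleneck hbottleneck, hβ₁, hβ₂, hα₁, hα₂]
  exact mul_div_mul_eq_div_mul_div _ _ _ _

/-- Suppose the evolution immediately preceding the `j`-th observable
factors through a one-dimensional "bottleneck": `U_j = W ∘ P_b ∘ V` where
`P_b x = ⟨ψ_b, x⟩ ψ_b` for a unit vector `ψ_b`.  If `D = ⟨ψ_f, M(∅) ψ_i⟩ ≠ 0`, then the
measurements before the bottleneck (indices `k < j`) and after it (indices `k ≥ j`) are
weakly independent: `w(T₁ ∪ T₂) = w(T₁)·w(T₂)` whenever `T₁ ⊆ {k | k < j}` and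
`T₂ ⊆ {k | j ≤ k}`. -/
theorem weaklyIndependent_of_bottleneck
    {H : Type*} [NormedAddCommGroup H] [InnerProductSpace ℂ H] [FiniteDimensional ℂ H]
    {n : ℕ} (ψi ψf ψb : H) (hψb : ‖ψb‖ = 1)
    (A : Fin n → Module.End ℂ H) (U : Fin (n + 1) → Module.End ℂ H)
    (j : Fin n) (W V : Module.End ℂ H)
    (hbottleneck : ∀ x : H, U j.castSucc x = W ((inner ℂ ψb (V x) : ℂ) • ψb))
    (hD : (inner ℂ ψf (seqOp n A U ∅ ψi) : ℂ) ≠ 0)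
    (T₁ T₂ : Finset (Fin n)) (hT₁ : ∀ k ∈ T₁, k < j) (hT₂ : ∀ k ∈ T₂, j ≤ k) :
    weakValue n A U ψi ψf (T₁ ∪ T₂) =
      weakValue n A U ψi ψf T₁ * weakValue n A U ψi ψf T₂ :=
  weaklyIndependent_of_bottleneck_general ψi ψf ψb A U j W V hbottleneck T₁ T₂ hT₁ hT₂
end

section
/- Let R be a commutative ring and let a, b, c, d : {1,…,n} → R. For ε ∈ {0,1}^n define u_k(0) = a_k, u_k(1) = c_k, v_k(0) = b_k, v_k(1) = d_k, and w_k(0) = a_k − b_k, w_k(1) = c_k − d_k. Then Σ_{ε ∈ {0,1}^n} (−1)^{ε_1+⋯+ε_n} · ( ∏_{k=1}^n u_k(ε_k) − ∏_{k=1}^n v_k(ε_k) ) · ∏_{k=1}^n w_k(1−ε_k) = 0. Equivalently, the sum factorizes as ∏_{k=1}^n ( a_k(c_k−d_k) − c_k(a_k−b_k) ) − ∏_{k=1}^n ( b_k(c_k−d_k) − d_k(a_k−b_k) ), and both products equal ∏_{k=1}^n (b_k c_k − a_k d_k), so their difference is zero. -/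
/-- Let `R` be a commutative ring and `a b c d : Fin n → R`.  With
`u_k(0) = a_k`, `u_k(1) = c_k`, `v_k(0) = b_k`, `v_k(1) = d_k`, `w_k(0) = a_k − b_k`,
`w_k(1) = c_k − d_k`, the alternating sum
`Σ_{ε ∈ {0,1}ⁿ} (−1)^{ε₁+⋯+εₙ} (∏_k u_k(ε_k) − ∏_k v_k(ε_k)) ∏_k w_k(1−ε_k)`
vanishes; equivalently it factorizes as
`∏_k (a_k(c_k−d_k) − c_k(a_k−b_k)) − ∏_k (b_k(c_k−d_k) − d_k(a_k−b_k))`, and both of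
these products equal `∏_k (b_k c_k − a_k d_k)`, so their difference is zero. -/
theorem alternating_sum_factorizes {R : Type*} [CommRing R] {n : ℕ} (hn : 1 ≤ n)
    (a b c d : Fin n → R) :
    (∑ ε : Fin n → Fin 2, (-1 : R) ^ (∑ k, (ε k : ℕ)) *
        ((∏ k, (if ε k = 0 then a k else c k)) - ∏ k, (if ε k = 0 then b k else d k)) *
        ∏ k, (if ε k = 0 then c k - d k else a k - b k) = 0) ∧
    (∑ ε : Fin n → Fin 2, (-1 : R) ^ (∑ k, (ε k : ℕ)) *
        ((∏ k, (if ε k = 0 then a k else c k)) - ∏ k, (if ε k = 0 then b k else d k)) *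
        ∏ k, (if ε k = 0 then c k - d k else a k - b k) =
      (∏ k, (a k * (c k - d k) - c k * (a k - b k))) -
        ∏ k, (b k * (c k - d k) - d k * (a k - b k))) ∧
    (∏ k, (a k * (c k - d k) - c k * (a k - b k)) = ∏ k, (b k * c k - a k * d k)) ∧
    (∏ k, (b k * (c k - d k) - d k * (a k - b k)) = ∏ k, (b k * c k - a k * d k)) := by
  have h3 : ∏ k, (a k * (c k - d k) - c k * (a k - b k)) = ∏ k, (b k * c k - a k * d k) :=
    Finset.prod_congr rfl (fun k _ => by ring)
  have h4 : ∏ k, (b k * (c k - d k) - d k * (a k - b k)) = ∏ k, (b k * c k - a k * d k) :=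
    Finset.prod_congr rfl (fun k _ => by ring)
  have key : ∀ x y : Fin n → R,
      ∑ ε : Fin n → Fin 2, (-1 : R) ^ (∑ k, (ε k : ℕ)) *
        (∏ k, (if ε k = 0 then x k else y k)) *
        ∏ k, (if ε k = 0 then c k - d k else a k - b k) =
      ∏ k, (x k * (c k - d k) - y k * (a k - b k)) := by
    intro x y
    have := Fintype.prod_sum (fun (k : Fin n) (j : Fin 2) =>
      (-1 : R) ^ (j : ℕ) * (if j = 0 then x k else y k) *
        (if j = 0 then c k - d k else a k - b k))
    rw [show (∏ k, (x k * (c k - d k) - y k * (a k - b k))) =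
        ∏ k, ∑ j : Fin 2, (-1 : R) ^ (j : ℕ) * (if j = 0 then x k else y k) *
          (if j = 0 then c k - d k else a k - b k) from
      Finset.prod_congr rfl (fun k _ => by simp [Fin.sum_univ_two]; ring), this]
    refine Finset.sum_congr rfl (fun ε _ => ?_)
    rw [Finset.prod_mul_distrib, Finset.prod_mul_distrib, ← Finset.prod_pow_eq_pow_sum]
  have h2 : ∑ ε : Fin n → Fin 2, (-1 : R) ^ (∑ k, (ε k : ℕ)) *
        ((∏ k, (if ε k = 0 then a k else c k)) - ∏ k, (if ε k = 0 then b k else d k)) *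
        ∏ k, (if ε k = 0 then c k - d k else a k - b k) =
      (∏ k, (a k * (c k - d k) - c k * (a k - b k))) -
        ∏ k, (b k * (c k - d k) - d k * (a k - b k)) := by
    rw [← key a c, ← key b d, ← Finset.sum_sub_distrib]
    refine Finset.sum_congr rfl (fun ε _ => by ring)
  refine ⟨?_, h2, h3, h4⟩
  rw [h2, h3, h4, sub_self]
end

section
/- Let n ≥ 2, let X_1,…,X_n be real random variables on a probability space such that the product ∏_{i∈S} X_i is integrable for every nonempty subset S of {1,…,n}, and suppose {1,…,n} is the disjoint union of two nonempty subsets S_1 and S_2 such that the σ-algebra generated by the family (X_i)_{i∈S_1} is independent of the σ-algebra generated by (X_j)_{j∈S_2}. Then the joint cumulant vanishes: Σ over all set partitions {B_1,…,B_k} of {1,…,n} of (k−1)!·(−1)^{k−1}·∏_{j=1}^k E[∏_{i∈B_j} X_i] = 0. -/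
/-!
For `h : Finset α → R` let `F_h(x) = ∑_P (∏_{B ∈ P} h B) · x(x-1)⋯(x-|P|+1)`, the sum running over
the partitions of `α`. Grouping the maps `c : α → Fin j` by their partition into fibres gives
`F_h(j) = ∑_c ∏_t h(c⁻¹{t})` whenever `h ∅ = 1`, and since the derivative of `x(x-1)⋯(x-k+1)` at
`0` is `(-1)^(k-1) (k-1)!`, the joint cumulant is `F_h'(0)` for `h` the mixed moment.

Independence splits the mixed moment of a block into the product of the mixed moments of its parts
in `S₁` and in `S₂`. A map on `Fin n` is a pair of maps on `S₁` and on its complement, so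
`F_h(j) = F_f(j) F_g(j)` for every `j : ℕ` and hence `F_h = F_f F_g`. As `F_f(0) = F_g(0) = 0`,
the derivative of the product vanishes at `0`.
-/

open MeasureTheory Finset Polynomial

namespace Finpartition

variable {α : Type*} [DecidableEq α] {s : Finset α}

theorem mem_parts_iff_exists_part_eq {P : Finpartition s} {B : Finset α} :
    B ∈ P.parts ↔ ∃ a ∈ s, P.part a = B :=
  ⟨fun hB => P.part_surjOn hB, fun ⟨_, ha, hB⟩ => hB ▸ P.part_mem.2 ha⟩

theorem part_choose_nonempty (P : Finpartition s) {B : Finset α} (hB : B ∈ P.parts) :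
    P.part (P.nonempty_of_mem_parts hB).choose = B :=
  P.part_eq_of_mem hB (P.nonempty_of_mem_parts hB).choose_spec

theorem eq_of_part_eq {P Q : Finpartition s} (h : ∀ a ∈ s, P.part a = Q.part a) : P = Q := by
  ext B
  simp only [mem_parts_iff_exists_part_eq]
  exact exists_congr fun a => and_congr_right fun ha => by rw [h a ha]

theorem card_parts_pos [Fintype α] [Nonempty α] (P : Finpartition (univ : Finset α)) :
    0 < #P.parts :=
  card_pos.2 (P.parts_nonempty univ_nonempty.ne_empty)

end Finpartition

instance Setoid.decidableRelKer {α β : Type*} [DecidableEq β] (c : α → β) :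
    DecidableRel (Setoid.ker c) :=
  fun a b => decEq (c a) (c b)

section KerPartition

variable {α β : Type*} [Fintype α] [DecidableEq α] [DecidableEq β]

def kerPartition (c : α → β) : Finpartition (univ : Finset α) :=
  Finpartition.ofSetoid (Setoid.ker c)

theorem mem_part_kerPartition {c : α → β} {a b : α} :
    b ∈ (kerPartition c).part a ↔ c a = c b :=
  Finpartition.mem_part_ofSetoid_iff_rel

theorem kerPartition_eq_iff {c : α → β} {P : Finpartition (univ : Finset α)} :
    kerPartition c = P ↔ ∀ a b, c a = c b ↔ P.part a = P.part b := by
  constructor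
  · rintro rfl a b
    rw [← mem_part_kerPartition, (kerPartition c).mem_part_iff_part_eq_part (mem_univ _)
      (mem_univ _), eq_comm]
  · refine fun h => Finpartition.eq_of_part_eq fun a _ => ?_
    ext b
    rw [mem_part_kerPartition, h, P.mem_part_iff_part_eq_part (mem_univ _) (mem_univ _), eq_comm]

theorem part_kerPartition (c : α → β) (a : α) :
    (kerPartition c).part a = ({b | c b = c a} : Finset α) := by
  ext b
  simp [mem_part_kerPartition, eq_comm]

variable [Fintype β]

theorem prod_fiber_eq_prod_parts_kerPartition {M : Type*} [CommMonoid M] (h : Finset α → M)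
    (h₀ : h ∅ = 1) (c : α → β) :
    ∏ t, h {a | c a = t} = ∏ B ∈ (kerPartition c).parts, h B := by
  have hparts :
      (kerPartition c).parts = (univ.image c).image fun t => ({a | c a = t} : Finset α) := by
    ext B
    simp [Finpartition.mem_parts_iff_exists_part_eq, part_kerPartition]
  have hinj : Set.InjOn (fun t => ({a | c a = t} : Finset α)) (univ.image c) := by
    intro t₀ ht₀ t _ hfib
    obtain ⟨a, -, rfl⟩ := mem_image.1 ht₀
    have : a ∈ ({b | c b = t} : Finset α) := by simp only at hfib; simp [← hfib]
    exact (mem_filter.1 this).2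
  rw [hparts, prod_image hinj]
  refine (prod_subset (subset_univ _) fun t _ ht => ?_).symm
  rw [filter_eq_empty_iff.2 fun a _ hat => ht (by simp [← hat]), h₀]

end KerPartition

section Counting

variable {α β : Type*} [Fintype α] [DecidableEq α] [DecidableEq β]

noncomputable def partsEmbeddingEquiv (P : Finpartition (univ : Finset α)) :
    (P.parts ↪ β) ≃ {c : α → β // kerPartition c = P} where
  toFun e := ⟨fun a => e ⟨P.part a, P.part_mem.2 (mem_univ a)⟩,
    kerPartition_eq_iff.2 fun a b => by rw [e.injective.eq_iff, Subtype.mk.injEq]⟩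
  invFun c := ⟨fun B => c.1 (P.nonempty_of_mem_parts B.2).choose, fun B B' hBB' => by
    have := (kerPartition_eq_iff.1 c.2 _ _).1 hBB'
    rwa [P.part_choose_nonempty B.2, P.part_choose_nonempty B'.2, ← Subtype.ext_iff] at this⟩
  left_inv e := by
    ext B
    exact congrArg e (Subtype.ext (P.part_choose_nonempty B.2))
  right_inv c := by
    ext a
    exact (kerPartition_eq_iff.1 c.2 _ _).2 (P.part_choose_nonempty (P.part_mem.2 (mem_univ a)))

theorem card_kerPartition_eq [Fintype β] (P : Finpartition (univ : Finset α)) :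
    #{c : α → β | kerPartition c = P} = (Fintype.card β).descFactorial #P.parts := by
  rw [← Fintype.card_subtype, ← Fintype.card_congr (partsEmbeddingEquiv P),
    Fintype.card_embedding_eq, Fintype.card_coe]

theorem sum_prod_fiber_eq_sum_finpartition [Fintype β] {R : Type*} [CommSemiring R]
    (h : Finset α → R) (h₀ : h ∅ = 1) :
    ∑ c : α → β, ∏ t, h {a | c a = t} =
      ∑ P : Finpartition (univ : Finset α),
        ((Fintype.card β).descFactorial #P.parts : R) * ∏ B ∈ P.parts, h B := by
  rw [← sum_fiberwise univ kerPartition]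
  refine sum_congr rfl fun P _ => ?_
  rw [sum_congr rfl fun c hc => (mem_filter.1 hc).2 ▸ prod_fiber_eq_prod_parts_kerPartition h h₀ c,
    sum_const, card_kerPartition_eq, nsmul_eq_mul]

end Counting

theorem derivative_descPochhammer_succ_eval_zero (R : Type*) [CommRing R] (k : ℕ) :
    (derivative (descPochhammer R (k + 1))).eval 0 = (-1) ^ k * k.factorial := by
  have hneg : (descPochhammer R k).eval (-1) = (-1) ^ k * k.factorial := by
    have := ascPochhammer_eval_neg_eq_descPochhammer R (-1) k
    rw [neg_neg, ascPochhammer_eval_one] at this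
    rw [this, ← mul_assoc, ← mul_pow, neg_one_mul, neg_neg, one_pow, one_mul]
  simp [descPochhammer_succ_left, derivative_mul, eval_comp, hneg]

section PartitionPoly

variable {α R : Type*} [Fintype α] [DecidableEq α] [CommRing R]

noncomputable def partitionPoly (h : Finset α → R) : R[X] :=
  ∑ P : Finpartition (univ : Finset α), C (∏ B ∈ P.parts, h B) * descPochhammer R #P.parts

theorem partitionPoly_eval_natCast (h : Finset α → R) (h₀ : h ∅ = 1) (j : ℕ) :
    (partitionPoly h).eval (j : R) = ∑ c : α → Fin j, ∏ t, h {a | c a = t} := by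
  simp only [partitionPoly, eval_finsetSum, eval_mul, eval_C, descPochhammer_eval_eq_descFactorial,
    sum_prod_fiber_eq_sum_finpartition h h₀, Fintype.card_fin, mul_comm]

theorem partitionPoly_eval_zero [Nonempty α] (h : Finset α → R) : (partitionPoly h).eval 0 = 0 := by
  simp only [partitionPoly, eval_finsetSum, eval_mul]
  exact sum_eq_zero fun P _ => by
    rw [descPochhammer_ne_zero_eval_zero R P.card_parts_pos.ne', mul_zero]

theorem derivative_partitionPoly_eval_zero [Nonempty α] (h : Finset α → R) :
    (derivative (partitionPoly h)).eval 0 =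
      ∑ P : Finpartition (univ : Finset α),
        ((#P.parts - 1).factorial : R) * (-1) ^ (#P.parts - 1) * ∏ B ∈ P.parts, h B := by
  simp only [partitionPoly, derivative_sum, derivative_C_mul, eval_finsetSum, eval_mul, eval_C]
  refine sum_congr rfl fun P _ => ?_
  rw [← Nat.sub_add_cancel P.card_parts_pos, derivative_descPochhammer_succ_eval_zero,
    Nat.add_sub_cancel]
  ring

theorem partitionPoly_mul [IsDomain R] [CharZero R] (p : α → Prop) [DecidablePred p]
    (f : Finset {a // p a} → R) (g : Finset {a // ¬p a} → R) (hf : f ∅ = 1) (hg : g ∅ = 1) :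
    partitionPoly (fun B => f (B.subtype p) * g (B.subtype (¬p ·))) =
      partitionPoly f * partitionPoly g := by
  refine eq_of_infinite_eval_eq _ _ ((Set.infinite_range_of_injective Nat.cast_injective).mono ?_)
  rintro _ ⟨j, rfl⟩
  have hfiber (c : α → Fin j) (q : α → Prop) [DecidablePred q] (t : Fin j) :
      ({a | c a = t} : Finset α).subtype q = ({a : {a // q a} | c a = t} : Finset _) := by
    ext
    simp
  have h₀ : f ((∅ : Finset α).subtype p) * g ((∅ : Finset α).subtype (¬p ·)) = 1 := by
    simp only [subtype_eq_empty.2 fun _ _ => notMem_empty _, hf, hg, mul_one]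
  rw [Set.mem_ofPred_eq, eval_mul,
    partitionPoly_eval_natCast (fun B => f (B.subtype p) * g (B.subtype (¬p ·))) h₀,
    partitionPoly_eval_natCast f hf, partitionPoly_eval_natCast g hg, Fintype.sum_mul_sum,
    ← Fintype.sum_prod_type',
    ← (Equiv.piEquivPiSubtypeProd p fun _ => Fin j).sum_comp]
  refine Fintype.sum_congr _ _ fun c => ?_
  rw [prod_mul_distrib]
  simp only [hfiber]
  rfl

end PartitionPoly

section MixedMoment

variable {Ω ι : Type*} {X : ι → Ω → ℝ}

theorem measurable_iSup_comap_prod {S T : Finset ι} (hT : T ⊆ S) :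
    Measurable[⨆ i ∈ S, MeasurableSpace.comap (X i) inferInstance] fun ω => ∏ i ∈ T, X i ω :=
  Finset.measurable_prod _ fun i hi => (comap_measurable (X i)).mono
    (le_iSup₂ (f := fun i (_ : i ∈ S) => MeasurableSpace.comap (X i) inferInstance) i (hT hi))
    le_rfl

variable [MeasurableSpace Ω] {μ : Measure Ω}

noncomputable def mixedMoment (μ : Measure Ω) (X : ι → Ω → ℝ) (T : Finset ι) : ℝ :=
  ∫ ω, ∏ i ∈ T, X i ω ∂μ

theorem mixedMoment_empty [IsProbabilityMeasure μ] : mixedMoment μ X ∅ = 1 := by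
  simp [mixedMoment]

theorem mixedMoment_subtype (p : ι → Prop) [DecidablePred p] (B : Finset ι) :
    mixedMoment μ (fun i : Subtype p => X i) (B.subtype p) = mixedMoment μ X {i ∈ B | p i} := by
  simp only [mixedMoment]
  congr with ω
  exact prod_subtype_eq_prod_filter fun i => X i ω

theorem mixedMoment_union_of_indep [DecidableEq ι] {S₁ S₂ T₁ T₂ : Finset ι}
    (hindep : ProbabilityTheory.Indep
      (⨆ i ∈ S₁, MeasurableSpace.comap (X i) inferInstance)
      (⨆ j ∈ S₂, MeasurableSpace.comap (X j) inferInstance) μ)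
    (hT₁ : T₁ ⊆ S₁) (hT₂ : T₂ ⊆ S₂) (hdisj : Disjoint T₁ T₂)
    (hX₁ : AEStronglyMeasurable (fun ω => ∏ i ∈ T₁, X i ω) μ)
    (hX₂ : AEStronglyMeasurable (fun ω => ∏ i ∈ T₂, X i ω) μ) :
    mixedMoment μ X (T₁ ∪ T₂) = mixedMoment μ X T₁ * mixedMoment μ X T₂ := by
  simp only [mixedMoment]
  simp_rw [prod_union hdisj]
  have hindep' : ProbabilityTheory.IndepFun (fun ω => ∏ i ∈ T₁, X i ω)
      (fun ω => ∏ i ∈ T₂, X i ω) μ :=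
    ProbabilityTheory.indep_of_indep_of_le_left
      (ProbabilityTheory.indep_of_indep_of_le_right hindep
        (measurable_iSup_comap_prod hT₂).comap_le)
      (measurable_iSup_comap_prod hT₁).comap_le
  exact hindep'.integral_fun_mul_eq_mul_integral hX₁ hX₂

end MixedMoment

theorem joint_cumulant_eq_zero_of_indep_general
    {Ω : Type*} [MeasurableSpace Ω] (μ : Measure Ω) [IsProbabilityMeasure μ]
    {n : ℕ} (X : Fin n → Ω → ℝ)
    (hint : ∀ S : Finset (Fin n), S.Nonempty → Integrable (fun ω => ∏ i ∈ S, X i ω) μ)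
    (S₁ S₂ : Finset (Fin n)) (h₁ : S₁.Nonempty) (h₂ : S₂.Nonempty)
    (hdisj : Disjoint S₁ S₂) (hunion : S₁ ∪ S₂ = Finset.univ)
    (hindep : ProbabilityTheory.Indep
      (⨆ i ∈ S₁, MeasurableSpace.comap (X i) inferInstance)
      (⨆ j ∈ S₂, MeasurableSpace.comap (X j) inferInstance) μ) :
    ∑ P : Finpartition (Finset.univ : Finset (Fin n)),
      (Nat.factorial (P.parts.card - 1) : ℝ) * (-1) ^ (P.parts.card - 1) *
        ∏ B ∈ P.parts, ∫ ω, ∏ i ∈ B, X i ω ∂μ = 0 := by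
  have hS₂ (i : Fin n) : i ∈ S₂ ↔ i ∉ S₁ := by
    have := hunion ▸ mem_univ i
    rw [mem_union] at this
    exact ⟨fun hi₂ hi₁ => disjoint_left.1 hdisj hi₁ hi₂, this.resolve_left⟩
  have hmeas (T : Finset (Fin n)) : AEStronglyMeasurable (fun ω => ∏ i ∈ T, X i ω) μ := by
    rcases T.eq_empty_or_nonempty with rfl | hT
    · exact aestronglyMeasurable_const
    · exact (hint T hT).aestronglyMeasurable
  have hfactor : mixedMoment μ X = fun B =>
      mixedMoment μ (fun i : {i // i ∈ S₁} => X i) (B.subtype (· ∈ S₁)) *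
        mixedMoment μ (fun i : {i // i ∉ S₁} => X i) (B.subtype (· ∉ S₁)) := by
    funext B
    rw [mixedMoment_subtype, mixedMoment_subtype, ← mixedMoment_union_of_indep hindep
      (fun i hi => (mem_filter.1 hi).2) (fun i hi => (hS₂ i).2 (mem_filter.1 hi).2)
      (disjoint_filter_filter_not _ _ _) (hmeas _) (hmeas _), filter_union_filter_not_eq]
  have : Nonempty (Fin n) := h₁.to_subtype.map Subtype.val
  have : Nonempty {i // i ∈ S₁} := h₁.to_subtype
  have : Nonempty {i // i ∉ S₁} := let ⟨i, hi⟩ := h₂; ⟨⟨i, (hS₂ i).1 hi⟩⟩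
  calc _ = (derivative (partitionPoly (mixedMoment μ X))).eval 0 :=
        (derivative_partitionPoly_eval_zero _).symm
    _ = 0 := by
        rw [hfactor, partitionPoly_mul _ _ _ mixedMoment_empty mixedMoment_empty, derivative_mul]
        simp [partitionPoly_eval_zero]

/-- Let `n ≥ 2` and let `X₁, …, Xₙ` be real random variables whose partial
products over nonempty index sets are integrable.  If `{1,…,n}` splits as a disjoint union of
nonempty sets `S₁`, `S₂` such that the σ-algebra generated by `(X_i)_{i ∈ S₁}` is independent
of the σ-algebra generated by `(X_j)_{j ∈ S₂}`, then the joint cumulant vanishes: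
`Σ_{partitions {B₁,…,B_k} of {1,…,n}} (k−1)! (−1)^{k−1} ∏_j E[∏_{i ∈ B_j} X_i] = 0`. -/
theorem joint_cumulant_eq_zero_of_indep
    {Ω : Type*} [MeasurableSpace Ω] (μ : Measure Ω) [IsProbabilityMeasure μ]
    {n : ℕ} (hn : 2 ≤ n) (X : Fin n → Ω → ℝ)
    (hint : ∀ S : Finset (Fin n), S.Nonempty → Integrable (fun ω => ∏ i ∈ S, X i ω) μ)
    (S₁ S₂ : Finset (Fin n)) (h₁ : S₁.Nonempty) (h₂ : S₂.Nonempty)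
    (hdisj : Disjoint S₁ S₂) (hunion : S₁ ∪ S₂ = Finset.univ)
    (hindep : ProbabilityTheory.Indep
      (⨆ i ∈ S₁, MeasurableSpace.comap (X i) inferInstance)
      (⨆ j ∈ S₂, MeasurableSpace.comap (X j) inferInstance) μ) :
    ∑ P : Finpartition (Finset.univ : Finset (Fin n)),
      (Nat.factorial (P.parts.card - 1) : ℝ) * (-1) ^ (P.parts.card - 1) *
        ∏ B ∈ P.parts, ∫ ω, ∏ i ∈ B, X i ω ∂μ = 0 :=
  joint_cumulant_eq_zero_of_indep_general μ X hint S₁ S₂ h₁ h₂ hdisj hunion hindep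
end
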